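/- Let (Ω₁, Λ₁) be a spectral pair in ℝ^{d₁}, Ω₂ ⊂ ℝ^{d₂} of finite positive measure, and for each λ₁ ∈ Λ₁ let Λ(λ₁) ⊂ ℝ^{d₂} be a discrete set such that (Ω₂, Λ(λ₁)) is a spectral pair. Then with Λ = {(λ₁, λ₂) : λ₁ ∈ Λ₁, λ₂ ∈ Λ(λ₁)}, the pair (Ω₁ × Ω₂, Λ) is a spectral pair in ℝ^{d₁+d₂}. -/

import Mathlib

open MeasureTheory Complex Set

/-- The exponential `e_λ(x) = e^{i2πλ·x}` on `ℝ^d`. -/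
noncomputable def expChar {d : ℕ} (l x : Fin d → ℝ) : ℂ :=
  Complex.exp (2 * Real.pi * Complex.I * ((∑ j, l j * x j : ℝ) : ℂ))

/-- `(μ, (e_l)_{l ∈ Λ})` is a spectral family: the exponentials indexed by `Λ` are
pairwise orthogonal and total in `L²(μ)`. -/
def IsSpectralFamily {α ι : Type*} [MeasurableSpace α] (μ : Measure α)
    (e : ι → α → ℂ) (Λ : Set ι) : Prop :=
  (∀ l ∈ Λ, ∀ l' ∈ Λ, l ≠ l' → ∫ x, (starRingEnd ℂ) (e l x) * e l' x ∂μ = 0) ∧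
  ∀ f : α → ℂ, MemLp f 2 μ →
    (∀ l ∈ Λ, ∫ x, (starRingEnd ℂ) (e l x) * f x ∂μ = 0) → f =ᵐ[μ] 0

lemma expChar_norm {d : ℕ} (l x : Fin d → ℝ) : ‖expChar l x‖ = 1 := by
  unfold expChar
  have h : 2 * Real.pi * Complex.I * ((∑ j, l j * x j : ℝ) : ℂ)
      = ((2 * Real.pi * ∑ j, l j * x j : ℝ) : ℂ) * Complex.I := by push_cast; ring
  rw [h, Complex.norm_exp_ofReal_mul_I]

lemma expChar_conj_mul {d : ℕ} (l x : Fin d → ℝ) :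
    (starRingEnd ℂ) (expChar l x) * expChar l x = 1 := by
  rw [Complex.conj_mul', expChar_norm]
  norm_num

lemma expChar_continuous {d : ℕ} (l : Fin d → ℝ) : Continuous (expChar l) := by
  unfold expChar
  exact Complex.continuous_exp.comp <| continuous_const.mul <|
    Complex.continuous_ofReal.comp <|
      continuous_finset_sum _ fun j _ => continuous_const.mul (continuous_apply j)

lemma expChar_memℒp {d : ℕ} (l : Fin d → ℝ) (μ : Measure (Fin d → ℝ)) [IsFiniteMeasure μ] :
    MemLp (expChar l) 2 μ :=
  MemLp.of_bound (expChar_continuous l).aestronglyMeasurable 1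
    (Filter.Eventually.of_forall fun x => le_of_eq (expChar_norm l x))

lemma countable_of_separated {X : Type*} [MetricSpace X]
    [SecondCountableTopology X] {s : Set X} {ε : ℝ} (hε : 0 < ε)
    (hs : s.Pairwise fun x y => ε ≤ dist x y) : s.Countable := by
  rcases s.eq_empty_or_nonempty with rfl | ⟨x₀, hx₀⟩
  · exact countable_empty
  haveI : Nonempty X := ⟨x₀⟩
  obtain ⟨D, hDc, hDd⟩ := TopologicalSpace.exists_countable_dense X
  have hD : D.Nonempty := hDd.nonempty
  have key : ∀ x : X, ∃ d, d ∈ D ∧ (x ∈ s → dist x d < ε / 2) := by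
    intro x
    by_cases hx : x ∈ s
    · obtain ⟨d, hd, hdd⟩ := hDd.exists_dist_lt x (show (0:ℝ) < ε/2 by linarith)
      exact ⟨d, hd, fun _ => hdd⟩
    · exact ⟨hD.choose, hD.choose_spec, fun h => absurd h hx⟩
  choose F hF1 hF2 using key
  refine Set.countable_of_injective_of_countable_image (f := F) ?_ ?_
  · intro x hx y hy hxy
    by_contra hne
    have h1 := hF2 x hx
    have h2 := hF2 y hy
    have h3 : ε ≤ dist x y := hs hx hy hne
    have h4 : dist x y ≤ dist x (F x) + dist (F y) y := by
      rw [hxy]; exact dist_triangle _ _ _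
    rw [dist_comm (F y) y] at h4
    linarith
  · exact hDc.mono (by rintro _ ⟨x, hx, rfl⟩; exact hF1 x)

lemma sq_integral_norm_le {α : Type*} [MeasurableSpace α] (μ : Measure α) [IsFiniteMeasure μ]
    (h : α → ℂ) (hh : MemLp h 2 μ) :
    (∫ x, ‖h x‖ ∂μ) ^ 2 ≤ (μ Set.univ).toReal * ∫ x, ‖h x‖ ^ 2 ∂μ := by
  have hn : MemLp (fun x => ‖h x‖) 2 μ := hh.norm
  set A : Lp ℝ 2 μ := hn.toLp _ with hA
  set B : Lp ℝ 2 μ := (memLp_const (1 : ℝ)).toLp _ with hB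
  have hAc : (A : α →₂[μ] ℝ) =ᵐ[μ] fun x => ‖h x‖ := MemLp.coeFn_toLp _
  have hBc : (B : α →₂[μ] ℝ) =ᵐ[μ] fun _ => (1 : ℝ) := MemLp.coeFn_toLp _
  have hAB : (inner ℝ A B : ℝ) = ∫ x, ‖h x‖ ∂μ := by
    rw [L2.inner_def]
    refine integral_congr_ae ?_
    filter_upwards [hAc, hBc] with x hx hx'
    simp only [RCLike.inner_apply, conj_trivial, hx, hx', mul_one, one_mul]
  have hA2 : ‖A‖ ^ 2 = ∫ x, ‖h x‖ ^ 2 ∂μ := by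
    rw [← inner_self_eq_norm_sq (𝕜 := ℝ), L2.inner_def]
    refine integral_congr_ae ?_
    filter_upwards [hAc] with x hx
    simp only [RCLike.inner_apply, conj_trivial, hx, sq]
  have hB2 : ‖B‖ ^ 2 = (μ Set.univ).toReal := by
    rw [← inner_self_eq_norm_sq (𝕜 := ℝ), L2.inner_def]
    have : ∫ x, (inner ℝ ((B : α →₂[μ] ℝ) x) ((B : α →₂[μ] ℝ) x) : ℝ) ∂μ = ∫ _x, (1 : ℝ) ∂μ := by
      refine integral_congr_ae ?_
      filter_upwards [hBc] with x hx
      simp only [RCLike.inner_apply, conj_trivial, hx, mul_one]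
    rw [this, integral_const, smul_eq_mul, mul_one]
    rfl
  have h0 : 0 ≤ ∫ x, ‖h x‖ ∂μ := integral_nonneg fun x => norm_nonneg _
  have hcs : (inner ℝ A B : ℝ) ≤ ‖A‖ * ‖B‖ := real_inner_le_norm A B
  calc (∫ x, ‖h x‖ ∂μ) ^ 2 ≤ (‖A‖ * ‖B‖) ^ 2 := by
        rw [← hAB] at h0 ⊢
        exact pow_le_pow_left₀ h0 hcs 2
    _ = ‖A‖ ^ 2 * ‖B‖ ^ 2 := by ring
    _ = (μ Set.univ).toReal * ∫ x, ‖h x‖ ^ 2 ∂μ := by rw [hA2, hB2]; ring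

/-- Cross-product construction of spectra: if `(Ω₁, Λ₁)` is a spectral pair, `Ω₂` has
finite positive measure, and for each `λ₁ ∈ Λ₁` there is a discrete set `Λ(λ₁)` with
`(Ω₂, Λ(λ₁))` a spectral pair, then `(Ω₁ × Ω₂, {(λ₁, λ₂) : λ₁ ∈ Λ₁, λ₂ ∈ Λ(λ₁)})`
is a spectral pair. -/
theorem stmt6 (d₁ d₂ : ℕ) (Ω₁ : Set (Fin d₁ → ℝ)) (Ω₂ : Set (Fin d₂ → ℝ))
    (hΩ₁ : 0 < volume Ω₁) (hΩ₁' : volume Ω₁ < ⊤)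
    (hΩ₂ : 0 < volume Ω₂) (hΩ₂' : volume Ω₂ < ⊤)
    (Λ₁ : Set (Fin d₁ → ℝ)) (Λf : (Fin d₁ → ℝ) → Set (Fin d₂ → ℝ))
    (h₁ : IsSpectralFamily (volume.restrict Ω₁) expChar Λ₁)
    (hdisc : ∀ l₁ ∈ Λ₁, DiscreteTopology ↥(Λf l₁))
    (h₂ : ∀ l₁ ∈ Λ₁, IsSpectralFamily (volume.restrict Ω₂) expChar (Λf l₁)) :
    IsSpectralFamily ((volume.restrict Ω₁).prod (volume.restrict Ω₂))
      (fun l p => expChar l.1 p.1 * expChar l.2 p.2)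
      {l : (Fin d₁ → ℝ) × (Fin d₂ → ℝ) | l.1 ∈ Λ₁ ∧ l.2 ∈ Λf l.1} := by
  set μ₁ := volume.restrict Ω₁ with hμ₁
  set μ₂ := volume.restrict Ω₂ with hμ₂
  haveI i₁ : IsFiniteMeasure μ₁ := ⟨by rw [hμ₁, Measure.restrict_apply_univ]; exact hΩ₁'⟩
  haveI i₂ : IsFiniteMeasure μ₂ := ⟨by rw [hμ₂, Measure.restrict_apply_univ]; exact hΩ₂'⟩
  constructor
  · -- orthogonality
    rintro ⟨l₁, l₂⟩ ⟨hl₁, hl₂⟩ ⟨l₁', l₂'⟩ ⟨hl₁', hl₂'⟩ hne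
    have factor : (∫ p : (Fin d₁ → ℝ) × (Fin d₂ → ℝ),
          (starRingEnd ℂ) (expChar l₁ p.1 * expChar l₂ p.2) *
            (expChar l₁' p.1 * expChar l₂' p.2) ∂μ₁.prod μ₂)
        = (∫ x, (starRingEnd ℂ) (expChar l₁ x) * expChar l₁' x ∂μ₁) *
          (∫ y, (starRingEnd ℂ) (expChar l₂ y) * expChar l₂' y ∂μ₂) := by
      rw [← integral_prod_mul]
      refine integral_congr_ae (Filter.Eventually.of_forall fun p => ?_)
      simp only [map_mul]; ring
    simp only []
    rw [factor]
    by_cases h : l₁ = l₁'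
    · subst h
      have h2 : l₂ ≠ l₂' := by
        intro h; exact hne (by rw [h])
      rw [(h₂ l₁ hl₁).1 l₂ hl₂ l₂' hl₂' h2, mul_zero]
    · rw [h₁.1 l₁ hl₁ l₁' hl₁' h, zero_mul]
  · -- totality
    intro f hf hzero
    obtain ⟨f', hf'meas, hff'⟩ : ∃ f', StronglyMeasurable f' ∧ f =ᵐ[μ₁.prod μ₂] f' :=
      ⟨hf.1.mk f, hf.1.stronglyMeasurable_mk, hf.1.ae_eq_mk⟩
    suffices hsuff : f' =ᵐ[μ₁.prod μ₂] 0 by exact hff'.trans hsuff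
    replace hf : MemLp f' 2 (μ₁.prod μ₂) := hf.ae_eq hff'
    replace hzero : ∀ l ∈ {l : (Fin d₁ → ℝ) × (Fin d₂ → ℝ) | l.1 ∈ Λ₁ ∧ l.2 ∈ Λf l.1},
        ∫ p, (starRingEnd ℂ) (expChar l.1 p.1 * expChar l.2 p.2) * f' p ∂μ₁.prod μ₂ = 0 := by
      intro l hl
      rw [← hzero l hl]
      exact integral_congr_ae (hff'.mono fun p hp => by simp only [hp])
    set c : ℝ := (volume Ω₁).toReal with hc
    have hcpos : 0 < c := ENNReal.toReal_pos hΩ₁.ne' hΩ₁'.ne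
    -- countability of Λ₁
    have hcount : Λ₁.Countable := by
      classical
      haveI : Fact ((2 : ENNReal) ≠ ⊤) := ⟨by norm_num⟩
      haveI : MeasureTheory.IsSeparable μ₁ := inferInstance
      set E : (Fin d₁ → ℝ) → Lp ℂ 2 μ₁ := fun l => (expChar_memℒp l μ₁).toLp _ with hE
      have hEc : ∀ l, (E l : (Fin d₁ → ℝ) →₂[μ₁] ℂ) =ᵐ[μ₁] expChar l := fun l =>
        MemLp.coeFn_toLp _
      have hinner : ∀ l l', (inner ℂ (E l) (E l') : ℂ)
          = ∫ x, (starRingEnd ℂ) (expChar l x) * expChar l' x ∂μ₁ := by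
        intro l l'
        rw [L2.inner_def]
        refine integral_congr_ae ?_
        filter_upwards [hEc l, hEc l'] with x hx hx'
        simp only [RCLike.inner_apply, hx, hx']; ring
      have hinner_self : ∀ l, (inner ℂ (E l) (E l) : ℂ) = (c : ℂ) := by
        intro l
        rw [hinner]
        have h1 : ∫ x, (starRingEnd ℂ) (expChar l x) * expChar l x ∂μ₁
            = ∫ _x, (1 : ℂ) ∂μ₁ :=
          integral_congr_ae (Filter.Eventually.of_forall fun x => expChar_conj_mul l x)
        rw [h1, integral_const, measureReal_def, Measure.restrict_apply_univ]
        rw [Complex.real_smul, mul_one]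
      have hnorm : ∀ l, ‖E l‖ ^ 2 = c := by
        intro l
        rw [← inner_self_eq_norm_sq (𝕜 := ℂ), hinner_self]
        exact Complex.ofReal_re c
      have hdist : ∀ l ∈ Λ₁, ∀ l' ∈ Λ₁, l ≠ l' → dist (E l) (E l') = Real.sqrt (2 * c) := by
        intro l hl l' hl' hne
        have ho : (inner ℂ (E l) (E l') : ℂ) = 0 := by
          rw [hinner]; exact h₁.1 l hl l' hl' hne
        have hds : dist (E l) (E l') ^ 2 = 2 * c := by
          rw [dist_eq_norm, norm_sub_sq (𝕜 := ℂ), hnorm, hnorm, ho]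
          simp only [map_zero, mul_zero, sub_zero]
          ring
        rw [← Real.sqrt_sq dist_nonneg, hds]
      have hsqpos : 0 < Real.sqrt (2 * c) := Real.sqrt_pos.mpr (by linarith)
      have hinj : Set.InjOn E Λ₁ := by
        intro l hl l' hl' hEe
        by_contra hne
        have hd := hdist l hl l' hl' hne
        rw [hEe, dist_self] at hd
        linarith
      have hsep : (E '' Λ₁).Pairwise fun a b => Real.sqrt (2 * c) ≤ dist a b := by
        rintro a ⟨l, hl, rfl⟩ b ⟨l', hl', rfl⟩ hab
        have hne : l ≠ l' := fun h => hab (by rw [h])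
        rw [hdist l hl l' hl' hne]
      exact Set.countable_of_injective_of_countable_image hinj
        (countable_of_separated hsqpos hsep)
    -- the partial inner products
    set g : (Fin d₁ → ℝ) → (Fin d₂ → ℝ) → ℂ :=
      fun l₁ y => ∫ x, (starRingEnd ℂ) (expChar l₁ x) * f' (x, y) ∂μ₁ with hg
    have hfi : Integrable f' (μ₁.prod μ₂) := hf.integrable one_le_two
    have hsq : Integrable (fun p => ‖f' p‖ ^ 2) (μ₁.prod μ₂) :=
      (memLp_two_iff_integrable_sq_norm hf.1).mp hf
    have hgmeas : ∀ l₁, StronglyMeasurable (g l₁) := by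
      intro l₁
      exact StronglyMeasurable.integral_prod_left'
        (((continuous_star.comp ((expChar_continuous l₁).comp continuous_fst)).stronglyMeasurable).mul
          hf'meas)
    have hslice_int : ∀ᵐ y ∂μ₂, Integrable (fun x => ‖f' (x, y)‖ ^ 2) μ₁ := hsq.prod_left_ae
    have hslice_mem : ∀ᵐ y ∂μ₂, MemLp (fun x => f' (x, y)) 2 μ₁ := by
      filter_upwards [hslice_int] with y hy
      exact (memLp_two_iff_integrable_sq_norm
        ((hf'meas.comp_measurable (measurable_id.prodMk measurable_const)).aestronglyMeasurable)).mpr hy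
    have hI_int : Integrable (fun y => ∫ x, ‖f' (x, y)‖ ^ 2 ∂μ₁) μ₂ := hsq.integral_prod_right
    have hgbound : ∀ l₁, ∀ᵐ y ∂μ₂, ‖g l₁ y‖ ^ 2 ≤ c * ∫ x, ‖f' (x, y)‖ ^ 2 ∂μ₁ := by
      intro l₁
      filter_upwards [hslice_mem] with y hy
      have h1 : ‖g l₁ y‖ ≤ ∫ x, ‖f' (x, y)‖ ∂μ₁ := by
        refine (norm_integral_le_integral_norm _).trans (le_of_eq ?_)
        refine integral_congr_ae (Filter.Eventually.of_forall fun x => ?_)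
        simp only [norm_mul, RCLike.norm_conj, expChar_norm, one_mul]
      have h2 := sq_integral_norm_le μ₁ _ hy
      rw [Measure.restrict_apply_univ] at h2
      calc ‖g l₁ y‖ ^ 2 ≤ (∫ x, ‖f' (x, y)‖ ∂μ₁) ^ 2 := pow_le_pow_left₀ (norm_nonneg _) h1 2
        _ ≤ c * ∫ x, ‖f' (x, y)‖ ^ 2 ∂μ₁ := h2
    have hgmem : ∀ l₁, MemLp (g l₁) 2 μ₂ := by
      intro l₁
      refine (memLp_two_iff_integrable_sq_norm (hgmeas l₁).aestronglyMeasurable).mpr ?_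
      refine Integrable.mono' (hI_int.const_mul c)
        ((hgmeas l₁).measurable.norm.pow_const 2).aestronglyMeasurable ?_
      filter_upwards [hgbound l₁] with y hy
      have hrw : ‖‖g l₁ y‖ ^ 2‖ = ‖g l₁ y‖ ^ 2 := Real.norm_of_nonneg (sq_nonneg (‖g l₁ y‖))
      rw [hrw]
      exact hy
    have key : ∀ l₁ ∈ Λ₁, ∀ l₂ ∈ Λf l₁,
        ∫ y, (starRingEnd ℂ) (expChar l₂ y) * g l₁ y ∂μ₂ = 0 := by
      intro l₁ hl₁ l₂ hl₂
      have hFint : Integrable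
          (fun p : (Fin d₁ → ℝ) × (Fin d₂ → ℝ) =>
            (starRingEnd ℂ) (expChar l₁ p.1 * expChar l₂ p.2) * f' p) (μ₁.prod μ₂) := by
        refine Integrable.bdd_mul hfi ?_ (c := 1) (Filter.Eventually.of_forall fun p => ?_)
        · exact (continuous_star.comp
            (((expChar_continuous l₁).comp continuous_fst).mul
              ((expChar_continuous l₂).comp continuous_snd))).aestronglyMeasurable
        · rw [RCLike.norm_conj, norm_mul, expChar_norm, expChar_norm, one_mul]
      have h0 := hzero (l₁, l₂) ⟨hl₁, hl₂⟩
      calc ∫ y, (starRingEnd ℂ) (expChar l₂ y) * g l₁ y ∂μ₂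
          = ∫ y, ∫ x, (starRingEnd ℂ) (expChar l₁ x * expChar l₂ y) * f' (x, y) ∂μ₁ ∂μ₂ := by
            refine integral_congr_ae (Filter.Eventually.of_forall fun y => ?_)
            simp only []
            rw [← integral_const_mul]
            refine integral_congr_ae (Filter.Eventually.of_forall fun x => ?_)
            simp only [map_mul]; ring
        _ = ∫ x, ∫ y, (starRingEnd ℂ) (expChar l₁ x * expChar l₂ y) * f' (x, y) ∂μ₂ ∂μ₁ :=
            (integral_integral_swap hFint).symm
        _ = ∫ p, (starRingEnd ℂ) (expChar l₁ p.1 * expChar l₂ p.2) * f' p ∂μ₁.prod μ₂ :=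
            integral_integral hFint
        _ = 0 := h0
    have hg0 : ∀ l₁ ∈ Λ₁, g l₁ =ᵐ[μ₂] 0 := fun l₁ hl₁ =>
      (h₂ l₁ hl₁).2 (g l₁) (hgmem l₁) (key l₁ hl₁)
    have hae : ∀ᵐ y ∂μ₂, ∀ l₁ ∈ Λ₁, g l₁ y = 0 := by
      rw [ae_ball_iff hcount]
      intro l₁ hl₁
      filter_upwards [hg0 l₁ hl₁] with y hy using hy
    have hslice0 : ∀ᵐ y ∂μ₂, ∫ x, ‖f' (x, y)‖ ^ 2 ∂μ₁ = 0 := by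
      filter_upwards [hae, hslice_mem] with y hy1 hy2
      have hz : (fun x => f' (x, y)) =ᵐ[μ₁] 0 :=
        h₁.2 (fun x => f' (x, y)) hy2 (fun l₁ hl₁ => hy1 l₁ hl₁)
      have : ∫ x, ‖f' (x, y)‖ ^ 2 ∂μ₁ = ∫ _x, (0 : ℝ) ∂μ₁ := by
        refine integral_congr_ae (hz.mono fun x hx => ?_)
        simp only [Pi.zero_apply] at hx
        simp only [hx, norm_zero]
        norm_num
      rw [this, integral_zero]
    have htot : ∫ p, ‖f' p‖ ^ 2 ∂μ₁.prod μ₂ = 0 := by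
      rw [integral_prod_symm _ hsq]
      have : ∫ y, ∫ x, ‖f' (x, y)‖ ^ 2 ∂μ₁ ∂μ₂ = ∫ _y, (0 : ℝ) ∂μ₂ :=
        integral_congr_ae (hslice0.mono fun y hy => hy)
      rw [this, integral_zero]
    have hzsq : (fun p => ‖f' p‖ ^ 2) =ᵐ[μ₁.prod μ₂] 0 :=
      (integral_eq_zero_iff_of_nonneg (fun p => by positivity) hsq).mp htot
    filter_upwards [hzsq] with p hp
    simp only [Pi.zero_apply] at hp ⊢
    have := pow_eq_zero_iff (n := 2) (by norm_num) |>.mp hp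
    exact norm_eq_zero.mp this
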